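/- arXiv:2008.08641 — 5 statements merged into one kernel-verified Lean document; each statement's English description precedes it below -/
import Mathlib

section
/- Let n ∈ ℕ and α, β > −1 be real, and let Ỹ(x) = (1−x)^((α+1)/2)·(1+x)^((β+1)/2)·P_n^{(α,β)}(x) for x ∈ (−1,1). Then Ỹ is twice differentiable on (−1,1) and satisfies Ỹ''(x) + Ω(x)Ỹ(x) = 0 for all x ∈ (−1,1), where Ω(x) = [(L²−1)(1−x²) − 2(α²−1)(1+x) − 2(β²−1)(1−x)] / (4(1−x²)²). -/
open Real Filter Set

/-- Generalized binomial coefficient `C(t, k) = t(t-1)⋯(t-k+1)/k!`. -/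
noncomputable def genBinom (t : ℝ) (k : ℕ) : ℝ :=
  (∏ i ∈ Finset.range k, (t - i)) / (Nat.factorial k)

/-- The Jacobi polynomial `P_n^{(α,β)}(x)`. -/
noncomputable def jacobiP (n : ℕ) (α β : ℝ) (x : ℝ) : ℝ :=
  ∑ m ∈ Finset.range (n + 1),
    genBinom (n + α) m * genBinom (n + β) (n - m) * ((x - 1) / 2) ^ (n - m) * ((x + 1) / 2) ^ m


/-!
Write `u = (x - 1) / 2`, `v = (x + 1) / 2`, so `P_n = ∑ₘ Aₘ u^(n-m) v^m`. The Jacobi operator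
`(1 - x²) D² + (β - α - (α + β + 2) x) D + n (n + α + β + 1)` sends `u^(n-m) v^m` to a combination
of itself and its two neighbours `u^(n-m∓1) v^(m±1)`, and the recurrence
`A_{m+1} (m + 1)(m + 1 + β) = Aₘ (n - m)(n - m + α)` of the binomial coefficients makes all these
contributions cancel: `P_n` solves the Jacobi equation.

For `Ỹ = w P` with `w'/w = r = (β + 1)/(2(1 + x)) - (α + 1)/(2(1 - x))` one has
`Ỹ'' = w (P'' + 2 r P' + (r' + r²) P)`. Since `2 r (1 - x²)` is the first-order coefficient of the
Jacobi equation and `(1 - x²)(r' + r² + Ω) = n (n + α + β + 1)`, the expression `Ỹ'' + Ω Ỹ` is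
`w / (1 - x²)` times the Jacobi equation, hence zero.
-/

open Topology

lemma genBinom_succ_mul (t : ℝ) (k : ℕ) :
    genBinom t (k + 1) * (k + 1) = genBinom t k * (t - k) := by
  have : (k.factorial : ℝ) ≠ 0 := by positivity
  simp only [genBinom, Finset.prod_range_succ, Nat.factorial_succ]
  push_cast
  field_simp

noncomputable def jacobiCoeff (n : ℕ) (α β : ℝ) (m : ℕ) : ℝ :=
  genBinom (n + α) m * genBinom (n + β) (n - m)

lemma jacobiCoeff_succ_mul (n : ℕ) (α β : ℝ) {m : ℕ} (h : m < n) :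
    jacobiCoeff n α β (m + 1) * ((m + 1) * (m + 1 + β)) =
      jacobiCoeff n α β m * ((n - m : ℕ) * ((n - m : ℕ) + α)) := by
  obtain ⟨p, rfl⟩ : ∃ p, n = m + (p + 1) := ⟨n - m - 1, by omega⟩
  have hα := genBinom_succ_mul ((↑(m + (p + 1)) : ℝ) + α) m
  have hβ := genBinom_succ_mul ((↑(m + (p + 1)) : ℝ) + β) p
  simp only [jacobiCoeff, show m + (p + 1) - (m + 1) = p by omega,
    show m + (p + 1) - m = p + 1 by omega] at *
  push_cast at *
  linear_combination (genBinom (m + (p + 1) + β) p * (m + 1 + β)) * hα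
    - (genBinom (m + (p + 1) + α) m * (p + 1 + α)) * hβ

noncomputable def jacobiBasis (p m : ℕ) (x : ℝ) : ℝ := ((x - 1) / 2) ^ p * ((x + 1) / 2) ^ m

-- `p - 1` and `m - 1` truncate only where the coefficient `p` resp. `m` in front vanishes.
noncomputable def jacobiBasisDeriv (p m : ℕ) (x : ℝ) : ℝ :=
  p / 2 * jacobiBasis (p - 1) m x + m / 2 * jacobiBasis p (m - 1) x

noncomputable def jacobiBasisDeriv2 (p m : ℕ) (x : ℝ) : ℝ :=
  p / 2 * jacobiBasisDeriv (p - 1) m x + m / 2 * jacobiBasisDeriv p (m - 1) x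

lemma hasDerivAt_jacobiBasis (p m : ℕ) (x : ℝ) :
    HasDerivAt (jacobiBasis p m) (jacobiBasisDeriv p m x) x := by
  have hu : HasDerivAt (fun y : ℝ => (y - 1) / 2) (1 / 2) x :=
    ((hasDerivAt_id x).sub_const 1).div_const 2
  have hv : HasDerivAt (fun y : ℝ => (y + 1) / 2) (1 / 2) x :=
    ((hasDerivAt_id x).add_const 1).div_const 2
  refine ((hu.fun_pow p).mul (hv.fun_pow m)).congr_deriv ?_
  simp only [jacobiBasisDeriv, jacobiBasis]
  ring

lemma hasDerivAt_jacobiBasisDeriv (p m : ℕ) (x : ℝ) :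
    HasDerivAt (jacobiBasisDeriv p m) (jacobiBasisDeriv2 p m x) x :=
  ((hasDerivAt_jacobiBasis _ _ x).const_mul _).add ((hasDerivAt_jacobiBasis _ _ x).const_mul _)

lemma jacobiBasis_ode (α β : ℝ) (p m : ℕ) (x : ℝ) :
    (1 - x ^ 2) * jacobiBasisDeriv2 p m x + (β - α - (α + β + 2) * x) * jacobiBasisDeriv p m x =
      -(p * (p + α)) * jacobiBasis (p - 1) (m + 1) x - m * (m + β) * jacobiBasis (p + 1) (m - 1) x
        - (2 * p * m + (β + 1) * p + (α + 1) * m) * jacobiBasis p m x := by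
  rcases p with _ | _ | p <;> rcases m with _ | _ | m <;>
    simp only [jacobiBasisDeriv2, jacobiBasisDeriv, jacobiBasis] <;> push_cast <;> ring

lemma jacobiP_eq_sum (n : ℕ) (α β : ℝ) :
    jacobiP n α β =
      fun x => ∑ m ∈ Finset.range (n + 1), jacobiCoeff n α β m * jacobiBasis (n - m) m x := by
  ext x
  exact Finset.sum_congr rfl fun m _ => by simp only [jacobiCoeff, jacobiBasis]; ring

noncomputable def jacobiPDeriv (n : ℕ) (α β : ℝ) (x : ℝ) : ℝ :=
  ∑ m ∈ Finset.range (n + 1), jacobiCoeff n α β m * jacobiBasisDeriv (n - m) m x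

noncomputable def jacobiPDeriv2 (n : ℕ) (α β : ℝ) (x : ℝ) : ℝ :=
  ∑ m ∈ Finset.range (n + 1), jacobiCoeff n α β m * jacobiBasisDeriv2 (n - m) m x

lemma hasDerivAt_jacobiP (n : ℕ) (α β x : ℝ) :
    HasDerivAt (jacobiP n α β) (jacobiPDeriv n α β x) x := by
  rw [jacobiP_eq_sum]
  exact HasDerivAt.fun_sum fun m _ => (hasDerivAt_jacobiBasis _ _ x).const_mul _

lemma hasDerivAt_jacobiPDeriv (n : ℕ) (α β x : ℝ) :
    HasDerivAt (jacobiPDeriv n α β) (jacobiPDeriv2 n α β x) x :=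
  HasDerivAt.fun_sum fun _ _ => (hasDerivAt_jacobiBasisDeriv _ _ x).const_mul _

lemma sum_jacobiCoeff_diag_eq_shift_down (n : ℕ) (α β x : ℝ) :
    ∑ m ∈ Finset.range (n + 1),
        jacobiCoeff n α β m * ((n - m : ℕ) * ((n - m : ℕ) + α)) * jacobiBasis (n - m) m x
      = ∑ m ∈ Finset.range (n + 1),
        jacobiCoeff n α β m * (m * (m + β)) * jacobiBasis (n - m + 1) (m - 1) x := by
  rw [Finset.sum_range_succ, Finset.sum_range_succ']
  refine congrArg₂ (· + ·) (Finset.sum_congr rfl fun m hm => ?_) (by simp)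
  rw [show n - (m + 1) + 1 = n - m by grind, Nat.add_sub_cancel, Nat.cast_succ,
    jacobiCoeff_succ_mul n α β (Finset.mem_range.mp hm)]

lemma sum_jacobiCoeff_diag_eq_shift_up (n : ℕ) (α β x : ℝ) :
    ∑ m ∈ Finset.range (n + 1), jacobiCoeff n α β m * (m * (m + β)) * jacobiBasis (n - m) m x
      = ∑ m ∈ Finset.range (n + 1), jacobiCoeff n α β m * ((n - m : ℕ) * ((n - m : ℕ) + α))
          * jacobiBasis (n - m - 1) (m + 1) x := by
  rw [Finset.sum_range_succ', Finset.sum_range_succ]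
  refine congrArg₂ (· + ·) (Finset.sum_congr rfl fun m hm => ?_) (by simp)
  rw [Nat.sub_succ', Nat.cast_succ, jacobiCoeff_succ_mul n α β (Finset.mem_range.mp hm)]

theorem jacobiP_ode (n : ℕ) (α β x : ℝ) :
    (1 - x ^ 2) * jacobiPDeriv2 n α β x + (β - α - (α + β + 2) * x) * jacobiPDeriv n α β x
      + n * (n + α + β + 1) * jacobiP n α β x = 0 := by
  set A := jacobiCoeff n α β
  set B := fun p m => jacobiBasis p m x
  -- the diagonal coefficient `n (n + α + β + 1) - 2pm - (β + 1)p - (α + 1)m` equals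
  -- `p (p + α) + m (m + β)` when `p + m = n`, and the two halves cancel against the neighbours
  have hterm : ∀ m ∈ Finset.range (n + 1),
      (1 - x ^ 2) * (A m * jacobiBasisDeriv2 (n - m) m x)
        + (β - α - (α + β + 2) * x) * (A m * jacobiBasisDeriv (n - m) m x)
        + n * (n + α + β + 1) * (A m * B (n - m) m)
      = (A m * ((n - m : ℕ) * ((n - m : ℕ) + α)) * B (n - m) m
          - A m * (m * (m + β)) * B (n - m + 1) (m - 1))
        + (A m * (m * (m + β)) * B (n - m) m
          - A m * ((n - m : ℕ) * ((n - m : ℕ) + α)) * B (n - m - 1) (m + 1)) := by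
    intro m hm
    have hcast : (n : ℝ) = (n - m : ℕ) + m := by
      rw [Nat.cast_sub (Nat.lt_succ_iff.mp (Finset.mem_range.mp hm))]; ring
    rw [hcast]
    linear_combination A m * jacobiBasis_ode α β (n - m) m x
  rw [jacobiP_eq_sum, jacobiPDeriv, jacobiPDeriv2, Finset.mul_sum, Finset.mul_sum, Finset.mul_sum,
    ← Finset.sum_add_distrib, ← Finset.sum_add_distrib, Finset.sum_congr rfl hterm,
    Finset.sum_add_distrib, Finset.sum_sub_distrib, Finset.sum_sub_distrib,
    sum_jacobiCoeff_diag_eq_shift_down, sum_jacobiCoeff_diag_eq_shift_up]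
  ring

theorem hasDerivAt_deriv_mul_of_hasDerivAt_mul_logDeriv {s : Set ℝ} (hs : IsOpen s)
    {w r r' f f' f'' : ℝ → ℝ} (hw : ∀ x ∈ s, HasDerivAt w (w x * r x) x)
    (hr : ∀ x ∈ s, HasDerivAt r (r' x) x) (hf : ∀ x ∈ s, HasDerivAt f (f' x) x)
    (hf' : ∀ x ∈ s, HasDerivAt f' (f'' x) x) {x : ℝ} (hx : x ∈ s) :
    HasDerivAt (deriv fun y => w y * f y)
      (w x * (f'' x + 2 * r x * f' x + (r' x + r x ^ 2) * f x)) x := by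
  have hderiv : deriv (fun y => w y * f y) =ᶠ[𝓝 x] fun y => w y * r y * f y + w y * f' y :=
    eventually_of_mem (hs.mem_nhds hx) fun y hy => ((hw y hy).mul (hf y hy)).deriv
  have hw' := hw x hx
  refine ((((hw'.fun_mul (hr x hx)).fun_mul (hf x hx)).add (hw'.mul (hf' x hx))).congr_deriv
    ?_).congr_of_eventuallyEq hderiv
  ring

lemma hasDerivAt_one_sub_rpow_mul_one_add_rpow (a b : ℝ) {x : ℝ} (hx : x ∈ Ioo (-1 : ℝ) 1) :
    HasDerivAt (fun y => (1 - y) ^ a * (1 + y) ^ b)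
      ((1 - x) ^ a * (1 + x) ^ b * (b / (1 + x) - a / (1 - x))) x := by
  have h₁ : 1 - x ≠ 0 := by linarith [hx.2]
  have h₂ : 1 + x ≠ 0 := by linarith [hx.1]
  have hA := ((hasDerivAt_id x).const_sub 1).rpow_const (p := a) (Or.inl h₁)
  have hB := ((hasDerivAt_id x).const_add 1).rpow_const (p := b) (Or.inl h₂)
  refine (hA.mul hB).congr_deriv ?_
  simp only [id, rpow_sub_one h₁, rpow_sub_one h₂]
  field_simp
  ring

lemma hasDerivAt_div_one_add_sub_div_one_sub (a b : ℝ) {x : ℝ} (hx : x ∈ Ioo (-1 : ℝ) 1) :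
    HasDerivAt (fun y => b / (1 + y) - a / (1 - y)) (-b / (1 + x) ^ 2 - a / (1 - x) ^ 2) x := by
  have h₁ : 1 - x ≠ 0 := by linarith [hx.2]
  have h₂ : 1 + x ≠ 0 := by linarith [hx.1]
  have hA := ((hasDerivAt_id x).const_add 1).inv h₂
  have hB := ((hasDerivAt_id x).const_sub 1).inv h₁
  refine ((hA.const_mul b).sub (hB.const_mul a)).congr_deriv ?_
  simp only [id]
  field_simp

lemma jacobiP_liouville (n : ℕ) (α β w : ℝ) {x : ℝ} (hx : x ∈ Ioo (-1 : ℝ) 1) :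
    let r := (β + 1) / 2 / (1 + x) - (α + 1) / 2 / (1 - x)
    let r' := -((β + 1) / 2) / (1 + x) ^ 2 - (α + 1) / 2 / (1 - x) ^ 2
    w * (jacobiPDeriv2 n α β x + 2 * r * jacobiPDeriv n α β x + (r' + r ^ 2) * jacobiP n α β x)
      + (((2 * n + α + β + 1) ^ 2 - 1) * (1 - x ^ 2) - 2 * (α ^ 2 - 1) * (1 + x)
        - 2 * (β ^ 2 - 1) * (1 - x)) / (4 * (1 - x ^ 2) ^ 2) * (w * jacobiP n α β x) = 0 := by
  intro r r'
  have h₁ : 1 - x ≠ 0 := by linarith [hx.2]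
  have h₂ : 1 + x ≠ 0 := by linarith [hx.1]
  have h₁₂ : 1 - x ^ 2 ≠ 0 := by rw [show 1 - x ^ 2 = (1 - x) * (1 + x) by ring]; positivity
  calc _ = w / (1 - x ^ 2) * ((1 - x ^ 2) * jacobiPDeriv2 n α β x
        + (β - α - (α + β + 2) * x) * jacobiPDeriv n α β x
        + n * (n + α + β + 1) * jacobiP n α β x) := by
        simp only [r, r']
        field_simp
        ring
    _ = 0 := by rw [jacobiP_ode, mul_zero]

theorem stmt2_general (n : ℕ) (α β : ℝ)
    (Y : ℝ → ℝ)
    (hY : ∀ x ∈ Set.Ioo (-1 : ℝ) 1,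
      Y x = (1 - x) ^ ((α + 1) / 2) * (1 + x) ^ ((β + 1) / 2) * jacobiP n α β x)
    (L : ℝ) (hL : L = 2 * n + α + β + 1)
    (Ω : ℝ → ℝ)
    (hΩ : ∀ x ∈ Set.Ioo (-1 : ℝ) 1,
      Ω x = ((L ^ 2 - 1) * (1 - x ^ 2) - 2 * (α ^ 2 - 1) * (1 + x)
        - 2 * (β ^ 2 - 1) * (1 - x)) / (4 * (1 - x ^ 2) ^ 2)) :
    (∀ x ∈ Set.Ioo (-1 : ℝ) 1, DifferentiableAt ℝ Y x ∧ DifferentiableAt ℝ (deriv Y) x) ∧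
    ∀ x ∈ Set.Ioo (-1 : ℝ) 1, deriv (deriv Y) x + Ω x * Y x = 0 := by
  set w := fun x : ℝ => (1 - x) ^ ((α + 1) / 2) * (1 + x) ^ ((β + 1) / 2)
  have hYw : ∀ x ∈ Ioo (-1 : ℝ) 1, Y =ᶠ[𝓝 x] fun y => w y * jacobiP n α β y := fun x hx =>
    eventually_of_mem (isOpen_Ioo.mem_nhds hx) hY
  have hY' : ∀ x ∈ Ioo (-1 : ℝ) 1, DifferentiableAt ℝ Y x := fun x hx =>
    (((hasDerivAt_one_sub_rpow_mul_one_add_rpow _ _ hx).mul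
      (hasDerivAt_jacobiP n α β x)).congr_of_eventuallyEq (hYw x hx)).differentiableAt
  have hY'' : ∀ x ∈ Ioo (-1 : ℝ) 1, HasDerivAt (deriv Y) _ x := fun x hx =>
    (hasDerivAt_deriv_mul_of_hasDerivAt_mul_logDeriv isOpen_Ioo
      (fun _ hy => hasDerivAt_one_sub_rpow_mul_one_add_rpow _ _ hy)
      (fun _ hy => hasDerivAt_div_one_add_sub_div_one_sub _ _ hy)
      (fun y _ => hasDerivAt_jacobiP n α β y) (fun y _ => hasDerivAt_jacobiPDeriv n α β y)
      hx).congr_of_eventuallyEq (hYw x hx).deriv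
  refine ⟨fun x hx => ⟨hY' x hx, (hY'' x hx).differentiableAt⟩, fun x hx => ?_⟩
  rw [(hY'' x hx).deriv, hY x hx, hΩ x hx, hL]
  exact jacobiP_liouville n α β _ hx

theorem stmt2 (n : ℕ) (α β : ℝ) (hα : -1 < α) (hβ : -1 < β)
    (Y : ℝ → ℝ)
    (hY : ∀ x ∈ Set.Ioo (-1 : ℝ) 1,
      Y x = (1 - x) ^ ((α + 1) / 2) * (1 + x) ^ ((β + 1) / 2) * jacobiP n α β x)
    (L : ℝ) (hL : L = 2 * n + α + β + 1)
    (Ω : ℝ → ℝ)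
    (hΩ : ∀ x ∈ Set.Ioo (-1 : ℝ) 1,
      Ω x = ((L ^ 2 - 1) * (1 - x ^ 2) - 2 * (α ^ 2 - 1) * (1 + x)
        - 2 * (β ^ 2 - 1) * (1 - x)) / (4 * (1 - x ^ 2) ^ 2)) :
    (∀ x ∈ Set.Ioo (-1 : ℝ) 1, DifferentiableAt ℝ Y x ∧ DifferentiableAt ℝ (deriv Y) x) ∧
    ∀ x ∈ Set.Ioo (-1 : ℝ) 1, deriv (deriv Y) x + Ω x * Y x = 0 :=
  stmt2_general n α β Y hY L hL Ω hΩ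
end

section
/- Let n ≥ 1 be a natural number and α, β > −1 be real, and let Ω(θ) = L²/4 − (α² − 1/4)/(2(1 − cos θ)) − (β² − 1/4)/(2(1 + cos θ)) for θ ∈ (0,π), where L = 2n+α+β+1. Then: (i) if |α| > 1/2 and |β| > 1/2, Ω' has exactly one zero θ_c in (0,π) and Ω attains a strict global maximum on (0,π) at θ_c; (ii) if |α| < 1/2 and |β| < 1/2, Ω' has exactly one zero θ_c in (0,π) and Ω attains a strict global minimum on (0,π) at θ_c; (iii) if (1/4 − α²)(1/4 − β²) < 0, then Ω is strictly monotonic on (0,π). -/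
/-!
Up to a positive factor, `Ω'(θ)` is `sin θ · (A/(1-c)² - B/(1+c)²)` with `c = cos θ`,
`A = α² - 1/4`, `B = β² - 1/4`. When `A, B > 0` the bracket factors as a positive multiple of
`c - c₀` with `c₀ = (√B - √A)/(√A + √B) ∈ (-1, 1)`, so `Ω` increases up to `θc = arccos c₀` and
decreases after it; `A, B < 0` is the same for `-Ω`. When `A` and `B` have opposite signs the
bracket has constant sign.
-/

open Real Set

section SignChange

variable {f : ℝ → ℝ} {a b c : ℝ}

theorem deriv_eq_zero_and_isStrictMaxOn_of_deriv_pos_neg (hc : c ∈ Ioo a b)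
    (hf : ContinuousOn f (Ioo a b)) (hpos : ∀ x ∈ Ioo a c, 0 < deriv f x)
    (hneg : ∀ x ∈ Ioo c b, deriv f x < 0) :
    deriv f c = 0 ∧ (∀ x ∈ Ioo a b, deriv f x = 0 → x = c) ∧
      ∀ x ∈ Ioo a b, x ≠ c → f x < f c := by
  have hmono : StrictMonoOn f (Ioc a c) :=
    strictMonoOn_of_deriv_pos (convex_Ioc a c) (hf.mono (Ioc_subset_Ioo_right hc.2))
      (by rwa [interior_Ioc])
  have hanti : StrictAntiOn f (Ico c b) :=
    strictAntiOn_of_deriv_neg (convex_Ico c b) (hf.mono (Ico_subset_Ioo_left hc.1))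
      (by rwa [interior_Ico])
  have hmax : ∀ x ∈ Ioo a b, x ≠ c → f x < f c := by
    intro x hx hxc
    rcases hxc.lt_or_gt with hlt | hgt
    · exact hmono ⟨hx.1, hlt.le⟩ ⟨hc.1, le_rfl⟩ hlt
    · exact hanti ⟨le_rfl, hc.2⟩ ⟨hgt.le, hx.2⟩ hgt
  refine ⟨IsLocalMax.deriv_eq_zero ?_, fun x hx hx0 => ?_, hmax⟩
  · filter_upwards [isOpen_Ioo.mem_nhds hc] with x hx
    rcases eq_or_ne x c with rfl | hxc
    · exact le_rfl
    · exact (hmax x hx hxc).le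
  · by_contra hxc
    rcases Ne.lt_or_gt hxc with hlt | hgt
    · exact (hpos x ⟨hx.1, hlt⟩).ne' hx0
    · exact (hneg x ⟨hgt, hx.2⟩).ne hx0

theorem deriv_eq_zero_and_isStrictMinOn_of_deriv_neg_pos (hc : c ∈ Ioo a b)
    (hf : ContinuousOn f (Ioo a b)) (hneg : ∀ x ∈ Ioo a c, deriv f x < 0)
    (hpos : ∀ x ∈ Ioo c b, 0 < deriv f x) :
    deriv f c = 0 ∧ (∀ x ∈ Ioo a b, deriv f x = 0 → x = c) ∧
      ∀ x ∈ Ioo a b, x ≠ c → f c < f x := by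
  obtain ⟨hcrit, huniq, hmin⟩ := deriv_eq_zero_and_isStrictMaxOn_of_deriv_pos_neg (f := -f) hc
    hf.neg (fun x hx => by simpa using hneg x hx) (fun x hx => by simpa using hpos x hx)
  refine ⟨by simpa using hcrit, fun x hx hx0 => huniq x hx (by simp [hx0]), fun x hx hxc => ?_⟩
  simpa using hmin x hx hxc

end SignChange

theorem exists_pos_mul_eq_sq_div_sq_sub_sq_div_sq {a b c : ℝ} (ha : 0 < a) (hb : 0 < b)
    (hc : c ∈ Ioo (-1) 1) :
    ∃ k > 0, a ^ 2 / (1 - c) ^ 2 - b ^ 2 / (1 + c) ^ 2 = k * (c - (b - a) / (a + b)) := by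
  obtain ⟨hc₁, hc₂⟩ := hc
  refine ⟨(a + b) * (a * (1 + c) + b * (1 - c)) / ((1 - c) ^ 2 * (1 + c) ^ 2), ?_, ?_⟩
  · have : 0 < a * (1 + c) + b * (1 - c) := by nlinarith
    exact div_pos (mul_pos (by linarith) this)
      (mul_pos (pow_pos (by linarith) 2) (pow_pos (by linarith) 2))
  · have : 1 - c ≠ 0 := by linarith
    have : 1 + c ≠ 0 := by linarith
    field_simp
    ring

noncomputable def jacobiOmega (K A B θ : ℝ) : ℝ :=
  K - A / (2 * (1 - cos θ)) - B / (2 * (1 + cos θ))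

theorem cos_mem_Ioo_of_mem_Ioo {θ : ℝ} (hθ : θ ∈ Ioo 0 π) : cos θ ∈ Ioo (-1) 1 := by
  constructor
  · simpa using cos_lt_cos_of_nonneg_of_le_pi hθ.1.le le_rfl hθ.2
  · simpa using cos_lt_cos_of_nonneg_of_le_pi le_rfl hθ.2.le hθ.1

theorem hasDerivAt_jacobiOmega (K A B : ℝ) {θ : ℝ} (h₁ : 1 - cos θ ≠ 0) (h₂ : 1 + cos θ ≠ 0) :
    HasDerivAt (jacobiOmega K A B)
      (sin θ / 2 * (A / (1 - cos θ) ^ 2 - B / (1 + cos θ) ^ 2)) θ := by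
  have d₁ : HasDerivAt (fun x => 2 * (1 - cos x)) (2 * sin θ) θ := by
    simpa using ((hasDerivAt_cos θ).const_sub 1).const_mul 2
  have d₂ : HasDerivAt (fun x => 2 * (1 + cos x)) (2 * -sin θ) θ := by
    simpa using ((hasDerivAt_cos θ).const_add 1).const_mul 2
  refine (((hasDerivAt_const θ K).sub ((hasDerivAt_const θ A).div d₁ (by simpa))).sub
    ((hasDerivAt_const θ B).div d₂ (by simpa))).congr_deriv ?_
  field_simp
  ring

section EqOnJacobiOmega

variable {f : ℝ → ℝ} {K A B : ℝ}

theorem Set.EqOn.neg_jacobiOmega {s : Set ℝ} (hf : EqOn f (jacobiOmega K A B) s) :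
    EqOn (-f) (jacobiOmega (-K) (-A) (-B)) s := fun θ hθ => by
  simp only [Pi.neg_apply, hf hθ, jacobiOmega]
  ring

theorem hasDerivAt_of_eqOn_jacobiOmega {θ : ℝ} (hf : EqOn f (jacobiOmega K A B) (Ioo 0 π))
    (hθ : θ ∈ Ioo 0 π) :
    HasDerivAt f (sin θ / 2 * (A / (1 - cos θ) ^ 2 - B / (1 + cos θ) ^ 2)) θ := by
  obtain ⟨hc₁, hc₂⟩ := cos_mem_Ioo_of_mem_Ioo hθ
  refine (hasDerivAt_jacobiOmega K A B (by linarith) (by linarith)).congr_of_eventuallyEq ?_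
  filter_upwards [isOpen_Ioo.mem_nhds hθ] with x hx using hf hx

theorem continuousOn_of_eqOn_jacobiOmega (hf : EqOn f (jacobiOmega K A B) (Ioo 0 π)) :
    ContinuousOn f (Ioo 0 π) := fun _ hθ =>
  (hasDerivAt_of_eqOn_jacobiOmega hf hθ).continuousAt.continuousWithinAt

theorem exists_deriv_pos_neg_of_eqOn_jacobiOmega (hA : 0 < A) (hB : 0 < B)
    (hf : EqOn f (jacobiOmega K A B) (Ioo 0 π)) :
    ∃ θc ∈ Ioo 0 π, (∀ θ ∈ Ioo 0 θc, 0 < deriv f θ) ∧ ∀ θ ∈ Ioo θc π, deriv f θ < 0 := by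
  set c₀ := (√B - √A) / (√A + √B)
  have hsum : 0 < √A + √B := by positivity
  have hc₀ : c₀ ∈ Ioo (-1) 1 :=
    ⟨by rw [lt_div_iff₀ hsum]; linarith [sqrt_pos.2 hB],
      by rw [div_lt_one hsum]; linarith [sqrt_pos.2 hA]⟩
  have hθc : arccos c₀ ∈ Ioo 0 π :=
    ⟨arccos_pos.2 hc₀.2, (arccos_le_pi c₀).lt_of_ne (mt arccos_eq_pi.1 (by linarith [hc₀.1]))⟩
  have hcos : cos (arccos c₀) = c₀ := cos_arccos hc₀.1.le hc₀.2.le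
  have hderiv : ∀ θ ∈ Ioo 0 π, ∃ m > 0, deriv f θ = m * (cos θ - cos (arccos c₀)) := by
    intro θ hθ
    obtain ⟨k, hk, hbracket⟩ := exists_pos_mul_eq_sq_div_sq_sub_sq_div_sq (sqrt_pos.2 hA)
      (sqrt_pos.2 hB) (cos_mem_Ioo_of_mem_Ioo hθ)
    rw [sq_sqrt hA.le, sq_sqrt hB.le] at hbracket
    refine ⟨sin θ / 2 * k, mul_pos (half_pos (sin_pos_of_pos_of_lt_pi hθ.1 hθ.2)) hk, ?_⟩
    rw [(hasDerivAt_of_eqOn_jacobiOmega hf hθ).deriv, hbracket, hcos, mul_assoc]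
  refine ⟨arccos c₀, hθc, fun θ hθ => ?_, fun θ hθ => ?_⟩
  · obtain ⟨m, hm, hm'⟩ := hderiv θ ⟨hθ.1, hθ.2.trans hθc.2⟩
    rw [hm']
    exact mul_pos hm (sub_pos.2 (cos_lt_cos_of_nonneg_of_le_pi hθ.1.le hθc.2.le hθ.2))
  · obtain ⟨m, hm, hm'⟩ := hderiv θ ⟨hθc.1.trans hθ.1, hθ.2⟩
    rw [hm']
    exact mul_neg_of_pos_of_neg hm
      (sub_neg.2 (cos_lt_cos_of_nonneg_of_le_pi hθc.1.le hθ.2.le hθ.1))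

theorem exists_deriv_neg_pos_of_eqOn_jacobiOmega (hA : A < 0) (hB : B < 0)
    (hf : EqOn f (jacobiOmega K A B) (Ioo 0 π)) :
    ∃ θc ∈ Ioo 0 π, (∀ θ ∈ Ioo 0 θc, deriv f θ < 0) ∧ ∀ θ ∈ Ioo θc π, 0 < deriv f θ := by
  obtain ⟨θc, hθc, hpos, hneg⟩ :=
    exists_deriv_pos_neg_of_eqOn_jacobiOmega (neg_pos.2 hA) (neg_pos.2 hB) hf.neg_jacobiOmega
  exact ⟨θc, hθc, fun θ hθ => by simpa using hpos θ hθ, fun θ hθ => by simpa using hneg θ hθ⟩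

theorem strictMonoOn_of_eqOn_jacobiOmega (hA : 0 < A) (hB : B < 0)
    (hf : EqOn f (jacobiOmega K A B) (Ioo 0 π)) : StrictMonoOn f (Ioo 0 π) := by
  refine strictMonoOn_of_deriv_pos (convex_Ioo 0 π) (continuousOn_of_eqOn_jacobiOmega hf)
    fun θ hθ => ?_
  rw [interior_Ioo] at hθ
  obtain ⟨hc₁, hc₂⟩ := cos_mem_Ioo_of_mem_Ioo hθ
  rw [(hasDerivAt_of_eqOn_jacobiOmega hf hθ).deriv]
  have : 0 < A / (1 - cos θ) ^ 2 := div_pos hA (by nlinarith)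
  have : B / (1 + cos θ) ^ 2 < 0 := div_neg_of_neg_of_pos hB (by nlinarith)
  exact mul_pos (half_pos (sin_pos_of_pos_of_lt_pi hθ.1 hθ.2)) (by linarith)

theorem strictAntiOn_of_eqOn_jacobiOmega (hA : A < 0) (hB : 0 < B)
    (hf : EqOn f (jacobiOmega K A B) (Ioo 0 π)) : StrictAntiOn f (Ioo 0 π) := by
  have := strictMonoOn_of_eqOn_jacobiOmega (neg_pos.2 hA) (neg_lt_zero.2 hB) hf.neg_jacobiOmega
  exact fun x hx y hy hxy => neg_lt_neg_iff.1 (this hx hy hxy)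

end EqOnJacobiOmega

theorem stmt6_general (α β : ℝ)
    (L : ℝ)
    (Ω : ℝ → ℝ)
    (hΩ : ∀ θ ∈ Set.Ioo 0 Real.pi,
      Ω θ = L ^ 2 / 4 - (α ^ 2 - 1 / 4) / (2 * (1 - Real.cos θ))
        - (β ^ 2 - 1 / 4) / (2 * (1 + Real.cos θ))) :
    (1 / 2 < |α| → 1 / 2 < |β| →
      ∃ θc ∈ Set.Ioo 0 Real.pi, deriv Ω θc = 0 ∧
        (∀ θ ∈ Set.Ioo 0 Real.pi, deriv Ω θ = 0 → θ = θc) ∧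
        ∀ θ ∈ Set.Ioo 0 Real.pi, θ ≠ θc → Ω θ < Ω θc) ∧
    (|α| < 1 / 2 → |β| < 1 / 2 →
      ∃ θc ∈ Set.Ioo 0 Real.pi, deriv Ω θc = 0 ∧
        (∀ θ ∈ Set.Ioo 0 Real.pi, deriv Ω θ = 0 → θ = θc) ∧
        ∀ θ ∈ Set.Ioo 0 Real.pi, θ ≠ θc → Ω θc < Ω θ) ∧
    ((1 / 4 - α ^ 2) * (1 / 4 - β ^ 2) < 0 →
      StrictMonoOn Ω (Set.Ioo 0 Real.pi) ∨ StrictAntiOn Ω (Set.Ioo 0 Real.pi)) := by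
  have hΩ' : EqOn Ω (jacobiOmega (L ^ 2 / 4) (α ^ 2 - 1 / 4) (β ^ 2 - 1 / 4)) (Ioo 0 π) := hΩ
  have hcont := continuousOn_of_eqOn_jacobiOmega hΩ'
  have sq_gt {x : ℝ} (h : 1 / 2 < |x|) : 1 / 4 < x ^ 2 := by nlinarith [sq_abs x, abs_nonneg x]
  have sq_lt {x : ℝ} (h : |x| < 1 / 2) : x ^ 2 < 1 / 4 := by nlinarith [sq_abs x, abs_nonneg x]
  refine ⟨fun hα hβ => ?_, fun hα hβ => ?_, fun h => ?_⟩
  · obtain ⟨θc, hθc, hpos, hneg⟩ := exists_deriv_pos_neg_of_eqOn_jacobiOmega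
      (by linarith [sq_gt hα]) (by linarith [sq_gt hβ]) hΩ'
    exact ⟨θc, hθc, deriv_eq_zero_and_isStrictMaxOn_of_deriv_pos_neg hθc hcont hpos hneg⟩
  · obtain ⟨θc, hθc, hneg, hpos⟩ := exists_deriv_neg_pos_of_eqOn_jacobiOmega
      (by linarith [sq_lt hα]) (by linarith [sq_lt hβ]) hΩ'
    exact ⟨θc, hθc, deriv_eq_zero_and_isStrictMinOn_of_deriv_neg_pos hθc hcont hneg hpos⟩
  · rcases mul_neg_iff.1 h with ⟨hα, hβ⟩ | ⟨hα, hβ⟩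
    · exact Or.inr (strictAntiOn_of_eqOn_jacobiOmega (by linarith) (by linarith) hΩ')
    · exact Or.inl (strictMonoOn_of_eqOn_jacobiOmega (by linarith) (by linarith) hΩ')

theorem stmt6 (n : ℕ) (hn : 1 ≤ n) (α β : ℝ) (hα : -1 < α) (hβ : -1 < β)
    (L : ℝ) (hL : L = 2 * n + α + β + 1)
    (Ω : ℝ → ℝ)
    (hΩ : ∀ θ ∈ Set.Ioo 0 Real.pi,
      Ω θ = L ^ 2 / 4 - (α ^ 2 - 1 / 4) / (2 * (1 - Real.cos θ))
        - (β ^ 2 - 1 / 4) / (2 * (1 + Real.cos θ))) :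
    (1 / 2 < |α| → 1 / 2 < |β| →
      ∃ θc ∈ Set.Ioo 0 Real.pi, deriv Ω θc = 0 ∧
        (∀ θ ∈ Set.Ioo 0 Real.pi, deriv Ω θ = 0 → θ = θc) ∧
        ∀ θ ∈ Set.Ioo 0 Real.pi, θ ≠ θc → Ω θ < Ω θc) ∧
    (|α| < 1 / 2 → |β| < 1 / 2 →
      ∃ θc ∈ Set.Ioo 0 Real.pi, deriv Ω θc = 0 ∧
        (∀ θ ∈ Set.Ioo 0 Real.pi, deriv Ω θ = 0 → θ = θc) ∧
        ∀ θ ∈ Set.Ioo 0 Real.pi, θ ≠ θc → Ω θc < Ω θ) ∧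
    ((1 / 4 - α ^ 2) * (1 / 4 - β ^ 2) < 0 →
      StrictMonoOn Ω (Set.Ioo 0 Real.pi) ∨ StrictAntiOn Ω (Set.Ioo 0 Real.pi)) :=
  stmt6_general α β L Ω hΩ
end

section
/- Let n ≥ 1 be a natural number and α, β be real. Then for all real x: (n+α+β+1)(1−x²)·P_{n−1}^{(α+1,β+1)}(x) + 2[β(1−x) − α(1+x)]·P_n^{(α,β)}(x) + 4(n+1)·P_{n+1}^{(α−1,β−1)}(x) = 0. -/
open Real Filter Set

lemma genBinom_succ (t : ℝ) (k : ℕ) :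
    genBinom t (k + 1) = genBinom t k * (t - k) / (k + 1) := by
  unfold genBinom
  rw [Finset.prod_range_succ, Nat.factorial_succ]
  push_cast
  rw [div_mul_eq_mul_div, div_div, mul_comm ((k:ℝ)+1)]

lemma genBinom_succ' (t : ℝ) (k : ℕ) :
    ((k : ℝ) + 1) * genBinom t (k + 1) = genBinom t k * (t - k) := by
  have hk : ((k : ℝ) + 1) ≠ 0 := by positivity
  rw [genBinom_succ]
  field_simp

lemma key (A B : ℝ) (j k : ℕ) :
    ((j : ℝ) + (k : ℝ) + 2) * genBinom A (j + 1) * genBinom B (k + 1)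
      = (A + B - ((j : ℝ) + (k : ℝ))) * genBinom A j * genBinom B k
        + (B - ((j : ℝ) + (k : ℝ) + 1)) * genBinom A (j + 1) * genBinom B k
        + (A - ((j : ℝ) + (k : ℝ) + 1)) * genBinom A j * genBinom B (k + 1) := by
  have hj : ((j : ℝ) + 1) ≠ 0 := by positivity
  have hk : ((k : ℝ) + 1) ≠ 0 := by positivity
  rw [genBinom_succ A j, genBinom_succ B k]
  field_simp
  ring

theorem stmt7 (n : ℕ) (hn : 1 ≤ n) (α β : ℝ) (x : ℝ) :
    ((n : ℝ) + α + β + 1) * (1 - x ^ 2) * jacobiP (n - 1) (α + 1) (β + 1) x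
      + 2 * (β * (1 - x) - α * (1 + x)) * jacobiP n α β x
      + 4 * ((n : ℝ) + 1) * jacobiP (n + 1) (α - 1) (β - 1) x = 0 := by
  obtain ⟨N, rfl⟩ : ∃ N, n = N + 1 := ⟨n - 1, by omega⟩
  set u := (x - 1) / 2 with hu
  set v := (x + 1) / 2 with hv
  set A := (N : ℝ) + 1 + α with hA
  set B := (N : ℝ) + 1 + β with hB
  have e1 : jacobiP (N + 1 - 1) (α + 1) (β + 1) x
      = ∑ j ∈ Finset.range (N + 1),
          genBinom A j * genBinom B (N - j) * u ^ (N - j) * v ^ j := by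
    have h1 : (N : ℝ) + (α + 1) = A := by rw [hA]; ring
    have h2 : (N : ℝ) + (β + 1) = B := by rw [hB]; ring
    simp only [jacobiP, Nat.add_sub_cancel, h1, h2, hu, hv]
  have e2 : jacobiP (N + 1) α β x
      = ∑ j ∈ Finset.range (N + 1 + 1),
          genBinom A j * genBinom B (N + 1 - j) * u ^ (N + 1 - j) * v ^ j := by
    have h1 : ((N + 1 : ℕ) : ℝ) + α = A := by rw [hA]; push_cast; ring
    have h2 : ((N + 1 : ℕ) : ℝ) + β = B := by rw [hB]; push_cast; ring
    simp only [jacobiP, h1, h2, hu, hv]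
  have e3 : jacobiP (N + 1 + 1) (α - 1) (β - 1) x
      = ∑ j ∈ Finset.range (N + 1 + 1 + 1),
          genBinom A j * genBinom B (N + 1 + 1 - j) * u ^ (N + 1 + 1 - j) * v ^ j := by
    have h1 : ((N + 1 + 1 : ℕ) : ℝ) + (α - 1) = A := by rw [hA]; push_cast; ring
    have h2 : ((N + 1 + 1 : ℕ) : ℝ) + (β - 1) = B := by rw [hB]; push_cast; ring
    simp only [jacobiP, h1, h2, hu, hv]
  -- canonical sum forms of the three products
  have T1 : (((N + 1 : ℕ) : ℝ) + α + β + 1) * (1 - x ^ 2) * jacobiP (N + 1 - 1) (α + 1) (β + 1) x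
      = ∑ j ∈ Finset.range (N + 1),
          (-4 * (A + B - (N : ℝ))) *
            (genBinom A j * genBinom B (N - j) * (u ^ (N - j) * u) * (v ^ j * v)) := by
    rw [e1, Finset.mul_sum]
    refine Finset.sum_congr rfl fun j hj => ?_
    rw [hu, hv, hA, hB]
    push_cast
    ring
  have T2 : 2 * (β * (1 - x) - α * (1 + x)) * jacobiP (N + 1) α β x
      = (∑ j ∈ Finset.range (N + 1 + 1),
          (-4 * β) * (genBinom A j * genBinom B (N + 1 - j) * (u ^ (N + 1 - j) * u) * v ^ j))
        + ∑ j ∈ Finset.range (N + 1 + 1),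
          (-4 * α) * (genBinom A j * genBinom B (N + 1 - j) * u ^ (N + 1 - j) * (v ^ j * v)) := by
    rw [e2, Finset.mul_sum, ← Finset.sum_add_distrib]
    refine Finset.sum_congr rfl fun j hj => ?_
    rw [hu, hv]
    ring
  have T3 : 4 * (((N + 1 : ℕ) : ℝ) + 1) * jacobiP (N + 1 + 1) (α - 1) (β - 1) x
      = ∑ j ∈ Finset.range (N + 1 + 1 + 1),
          (4 * ((N : ℝ) + 2)) *
            (genBinom A j * genBinom B (N + 1 + 1 - j) * u ^ (N + 1 + 1 - j) * v ^ j) := by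
    rw [e3, Finset.mul_sum]
    refine Finset.sum_congr rfl fun j hj => ?_
    push_cast
    ring
  -- reindexing
  have R2a : (∑ j ∈ Finset.range (N + 1 + 1),
        (-4 * β) * (genBinom A j * genBinom B (N + 1 - j) * (u ^ (N + 1 - j) * u) * v ^ j))
      = (∑ j ∈ Finset.range (N + 1),
          (-4 * β) * (genBinom A (j + 1) * genBinom B (N + 1 - (j + 1)) *
            (u ^ (N + 1 - (j + 1)) * u) * v ^ (j + 1)))
        + (-4 * β) * (genBinom A 0 * genBinom B (N + 1 - 0) * (u ^ (N + 1 - 0) * u) * v ^ 0) :=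
    Finset.sum_range_succ' _ (N + 1)
  have R2b : (∑ j ∈ Finset.range (N + 1 + 1),
        (-4 * α) * (genBinom A j * genBinom B (N + 1 - j) * u ^ (N + 1 - j) * (v ^ j * v)))
      = (∑ j ∈ Finset.range (N + 1),
          (-4 * α) * (genBinom A j * genBinom B (N + 1 - j) * u ^ (N + 1 - j) * (v ^ j * v)))
        + (-4 * α) * (genBinom A (N + 1) * genBinom B (N + 1 - (N + 1)) *
            u ^ (N + 1 - (N + 1)) * (v ^ (N + 1) * v)) :=
    Finset.sum_range_succ _ (N + 1)
  have R3 : (∑ j ∈ Finset.range (N + 1 + 1 + 1),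
        (4 * ((N : ℝ) + 2)) *
          (genBinom A j * genBinom B (N + 1 + 1 - j) * u ^ (N + 1 + 1 - j) * v ^ j))
      = ((∑ j ∈ Finset.range (N + 1),
          (4 * ((N : ℝ) + 2)) *
            (genBinom A (j + 1) * genBinom B (N + 1 + 1 - (j + 1)) *
              u ^ (N + 1 + 1 - (j + 1)) * v ^ (j + 1)))
          + (4 * ((N : ℝ) + 2)) *
            (genBinom A (N + 1 + 1) * genBinom B (N + 1 + 1 - (N + 1 + 1)) *
              u ^ (N + 1 + 1 - (N + 1 + 1)) * v ^ (N + 1 + 1)))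
        + (4 * ((N : ℝ) + 2)) *
            (genBinom A 0 * genBinom B (N + 1 + 1 - 0) * u ^ (N + 1 + 1 - 0) * v ^ 0) := by
    rw [Finset.sum_range_succ' _ (N + 1 + 1), Finset.sum_range_succ]
  -- interior terms vanish
  have final : ∀ j ∈ Finset.range (N + 1),
      (-4 * (A + B - (N : ℝ))) *
          (genBinom A j * genBinom B (N - j) * (u ^ (N - j) * u) * (v ^ j * v))
        + (-4 * β) * (genBinom A (j + 1) * genBinom B (N + 1 - (j + 1)) *
            (u ^ (N + 1 - (j + 1)) * u) * v ^ (j + 1))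
        + (-4 * α) * (genBinom A j * genBinom B (N + 1 - j) * u ^ (N + 1 - j) * (v ^ j * v))
        + (4 * ((N : ℝ) + 2)) *
            (genBinom A (j + 1) * genBinom B (N + 1 + 1 - (j + 1)) *
              u ^ (N + 1 + 1 - (j + 1)) * v ^ (j + 1)) = 0 := by
    intro j hj
    have hj' : j ≤ N := Nat.lt_succ_iff.mp (Finset.mem_range.mp hj)
    have i1 : N + 1 - (j + 1) = N - j := by omega
    have i2 : N + 1 + 1 - (j + 1) = (N - j) + 1 := by omega
    have i3 : N + 1 - j = (N - j) + 1 := by omega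
    rw [i1, i2, i3]
    have hc : ((N - j : ℕ) : ℝ) = (N : ℝ) - (j : ℝ) := Nat.cast_sub hj'
    have K := key A B j (N - j)
    rw [hc] at K
    rw [hA, hB] at K ⊢
    linear_combination (4 * u ^ ((N - j) + 1) * v ^ (j + 1)) * K
  have hsum : (∑ j ∈ Finset.range (N + 1),
        (-4 * (A + B - (N : ℝ))) *
          (genBinom A j * genBinom B (N - j) * (u ^ (N - j) * u) * (v ^ j * v)))
      + (∑ j ∈ Finset.range (N + 1),
          (-4 * β) * (genBinom A (j + 1) * genBinom B (N + 1 - (j + 1)) *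
            (u ^ (N + 1 - (j + 1)) * u) * v ^ (j + 1)))
      + (∑ j ∈ Finset.range (N + 1),
          (-4 * α) * (genBinom A j * genBinom B (N + 1 - j) * u ^ (N + 1 - j) * (v ^ j * v)))
      + (∑ j ∈ Finset.range (N + 1),
          (4 * ((N : ℝ) + 2)) *
            (genBinom A (j + 1) * genBinom B (N + 1 + 1 - (j + 1)) *
              u ^ (N + 1 + 1 - (j + 1)) * v ^ (j + 1))) = 0 := by
    rw [← Finset.sum_add_distrib, ← Finset.sum_add_distrib, ← Finset.sum_add_distrib]
    exact Finset.sum_eq_zero final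
  -- boundary terms vanish
  have hb1 : (-4 * β) * (genBinom A 0 * genBinom B (N + 1 - 0) * (u ^ (N + 1 - 0) * u) * v ^ 0)
      + (4 * ((N : ℝ) + 2)) *
          (genBinom A 0 * genBinom B (N + 1 + 1 - 0) * u ^ (N + 1 + 1 - 0) * v ^ 0) = 0 := by
    simp only [Nat.sub_zero]
    have S := genBinom_succ' B (N + 1)
    push_cast at S
    rw [hB] at S ⊢
    linear_combination (4 * genBinom A 0 * u ^ (N + 1) * u * v ^ 0) * S
  have hb2 : (-4 * α) * (genBinom A (N + 1) * genBinom B (N + 1 - (N + 1)) *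
        u ^ (N + 1 - (N + 1)) * (v ^ (N + 1) * v))
      + (4 * ((N : ℝ) + 2)) *
          (genBinom A (N + 1 + 1) * genBinom B (N + 1 + 1 - (N + 1 + 1)) *
            u ^ (N + 1 + 1 - (N + 1 + 1)) * v ^ (N + 1 + 1)) = 0 := by
    have i1 : N + 1 - (N + 1) = 0 := by omega
    have i2 : N + 1 + 1 - (N + 1 + 1) = 0 := by omega
    rw [i1, i2]
    have S := genBinom_succ' A (N + 1)
    push_cast at S
    rw [hA] at S ⊢
    linear_combination (4 * genBinom B 0 * u ^ 0 * v ^ (N + 1) * v) * S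
  rw [T1, T2, T3, R2a, R2b, R3]
  linear_combination hsum + hb1 + hb2
end

section
/- Let n ∈ ℕ and α, β be real. Then for all real x: (n+α+β+1)(1−x)·P_n^{(α+1,β)}(x) − [(2n+α+β+1)(1−x) + 2α]·P_n^{(α,β)}(x) + 2(α+n)·P_n^{(α−1,β)}(x) = 0. -/
open Real Filter Set

/-!
Write `a = n + α`, `u = (x - 1)/2`, `v = (x + 1)/2`, so that `1 - x = -2u` and `v = u + 1`.
By `a C(a - 1, m) = (a - m) C(a, m)` the `m`-th summand of the left-hand side is `2 Tₘ`, where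
`Tₘ = C(n+β, n-m) uⁿ⁻ᵐ vᵐ ((n C(a, m) - (a+β+1) C(a, m-1)) u + (n - m) C(a, m))`.
Pascal's rule, absorption `(k+1) C(t, k+1) = (t - k) C(t, k)` and `v = u + 1` show that `Tₘ`
telescopes: `Tₘ = Fₘ₊₁ - Fₘ` for `m < n` and `Tₙ = -Fₙ`, with
`Fₘ = (β + m) C(n+β, n-m) C(a, m-1) uⁿ⁻ᵐ⁺¹ vᵐ` and `F₀ = 0` (reading `C(a, -1) = 0`).
-/

open Finset

lemma genBinom_eq_choose (t : ℝ) (k : ℕ) : genBinom t k = Ring.choose t k := by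
  rw [Ring.choose_eq_smul, genBinom, ← descPochhammer_eval_eq_prod_range, smul_eq_mul,
    div_eq_inv_mul, ← Polynomial.aeval_eq_smeval, ← Polynomial.eval_map_algebraMap,
    descPochhammer_map]

@[simp]
lemma genBinom_zero_right (t : ℝ) : genBinom t 0 = 1 := by
  simp [genBinom]

lemma genBinom_succ_succ (t : ℝ) (k : ℕ) :
    genBinom (t + 1) (k + 1) = genBinom t k + genBinom t (k + 1) := by
  simp only [genBinom_eq_choose, Ring.choose_succ_succ]

lemma succ_mul_genBinom_succ (t : ℝ) (k : ℕ) :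
    ((k : ℝ) + 1) * genBinom t (k + 1) = (t - k) * genBinom t k := by
  have hk : (k.factorial : ℝ) ≠ 0 := by positivity
  rw [genBinom, genBinom, prod_range_succ, Nat.factorial_succ]
  push_cast
  field_simp

lemma add_one_mul_genBinom (t : ℝ) (m : ℕ) :
    (t + 1) * genBinom t m = (t + 1 - m) * genBinom (t + 1) m := by
  cases m with
  | zero => simp
  | succ k =>
    rw [genBinom_succ_succ]
    push_cast
    linear_combination succ_mul_genBinom_succ t k

lemma natCast_mul_genBinom (t : ℝ) (m : ℕ) :
    (m : ℝ) * genBinom t m = (t + 1 - m) * (genBinom (t + 1) m - genBinom t m) := by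
  linear_combination add_one_mul_genBinom t m

namespace JacobiContiguous

variable (n : ℕ) (α β x : ℝ)

/- `genBinom (n + α + 1) m - genBinom (n + α) m` stands for `C(n + α, m - 1)`, which would be
wrong at `m = 0` with truncated subtraction. -/
noncomputable def term (m : ℕ) : ℝ :=
  genBinom (n + β) (n - m) * ((x - 1) / 2) ^ (n - m) * ((x + 1) / 2) ^ m *
    ((n * genBinom (n + α) m
        - (n + α + β + 1) * (genBinom (n + α + 1) m - genBinom (n + α) m)) * ((x - 1) / 2)
      + (n - m) * genBinom (n + α) m)

noncomputable def primitive (m : ℕ) : ℝ :=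
  (β + m) * genBinom (n + β) (n - m) * (genBinom (n + α + 1) m - genBinom (n + α) m) *
    ((x - 1) / 2) ^ (n - m + 1) * ((x + 1) / 2) ^ m

lemma primitive_zero : primitive n α β x 0 = 0 := by
  simp [primitive]

lemma term_eq_primitive_succ_sub {m : ℕ} (hm : m < n) :
    term n α β x m = primitive n α β x (m + 1) - primitive n α β x m := by
  obtain ⟨k, rfl⟩ : ∃ k, n = m + 1 + k := ⟨n - (m + 1), by omega⟩
  have hsub : m + 1 + k - m = k + 1 := by omega
  have hsub' : m + 1 + k - (m + 1) = k := by omega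
  have absorb := succ_mul_genBinom_succ ((m + 1 + k : ℕ) + β) k
  have shift := natCast_mul_genBinom ((m + 1 + k : ℕ) + α) m
  simp only [term, primitive, hsub, hsub', genBinom_succ_succ]
  push_cast at absorb shift ⊢
  linear_combination
    genBinom (↑m + 1 + ↑k + α) m * ((x - 1) / 2) ^ (k + 1) * ((x + 1) / 2) ^ (m + 1) * absorb +
    genBinom (↑m + 1 + ↑k + β) (k + 1) * ((x - 1) / 2) ^ (k + 2) * ((x + 1) / 2) ^ m * shift

lemma primitive_add_term_self : primitive n α β x n + term n α β x n = 0 := by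
  simp only [primitive, term, Nat.sub_self, genBinom_zero_right]
  linear_combination ((x - 1) / 2) * ((x + 1) / 2) ^ n * natCast_mul_genBinom ((n : ℝ) + α) n

lemma sum_term : ∑ m ∈ range (n + 1), term n α β x m = 0 := by
  have telescope : ∑ m ∈ range n, term n α β x m = primitive n α β x n := by
    rw [sum_congr rfl fun m hm ↦ term_eq_primitive_succ_sub n α β x (mem_range.mp hm),
      sum_range_sub, primitive_zero, sub_zero]
  rw [sum_range_succ, telescope, primitive_add_term_self]

lemma summand_combination (m : ℕ) :
    ((n : ℝ) + α + β + 1) * (1 - x) * (genBinom (n + (α + 1)) m * genBinom (n + β) (n - m) *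
        ((x - 1) / 2) ^ (n - m) * ((x + 1) / 2) ^ m)
      - (((2 * n : ℝ) + α + β + 1) * (1 - x) + 2 * α) * (genBinom (n + α) m *
        genBinom (n + β) (n - m) * ((x - 1) / 2) ^ (n - m) * ((x + 1) / 2) ^ m)
      + 2 * (α + n) * (genBinom (n + (α - 1)) m * genBinom (n + β) (n - m) *
        ((x - 1) / 2) ^ (n - m) * ((x + 1) / 2) ^ m)
      = 2 * term n α β x m := by
  have lower := add_one_mul_genBinom ((n : ℝ) + α - 1) m
  rw [sub_add_cancel] at lower
  rw [term, ← add_assoc, add_sub_assoc']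
  linear_combination
    2 * genBinom (n + β) (n - m) * ((x - 1) / 2) ^ (n - m) * ((x + 1) / 2) ^ m * lower

end JacobiContiguous

open JacobiContiguous in
theorem stmt8 (n : ℕ) (α β : ℝ) (x : ℝ) :
    ((n : ℝ) + α + β + 1) * (1 - x) * jacobiP n (α + 1) β x
      - (((2 * n : ℝ) + α + β + 1) * (1 - x) + 2 * α) * jacobiP n α β x
      + 2 * (α + n) * jacobiP n (α - 1) β x = 0 := by
  simp only [jacobiP]
  rw [mul_sum, mul_sum, mul_sum, ← sum_sub_distrib, ← sum_add_distrib,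
    sum_congr rfl fun m _ ↦ summand_combination n α β x m, ← mul_sum, sum_term, mul_zero]
end

section
/- Let n ∈ ℕ and α, β be real. Then for all real x: (1−x²)·(d/dx)P_n^{(α,β)}(x) = (n(1−x) + 2α)·P_n^{(α,β)}(x) − 2(α+n)·P_n^{(α−1,β)}(x). -/
open Real Filter Set

/-!
Write `P_n^{(α,β)}(x) = ∑_{m+k=n} C(n+α, m) C(n+β, k) u^k v^m` with `u = (x-1)/2`, `v = (x+1)/2`.
Since `1 - x² = -4uv`, multiplying the derivative of `u^k v^m` by `1 - x²` gives
`-2 (k v + m u) u^k v^m`, with no lowered exponents left. The identity then holds term by term,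
once `C(n+α-1, m)` is traded for `C(n+α, m)` through `(n+α) C(n+α-1, m) = (n+α-m) C(n+α, m)`,
which compares the two recursions of the falling factorial.
-/

open Finset Polynomial

theorem genBinom_eq_descPochhammer_eval (t : ℝ) (k : ℕ) :
    genBinom t k = (descPochhammer ℝ k).eval t / k.factorial := by
  rw [descPochhammer_eval_eq_prod_range, genBinom]

theorem mul_genBinom_sub_one (t : ℝ) (m : ℕ) :
    t * genBinom (t - 1) m = (t - m) * genBinom t m := by
  have h := congrArg (eval t) (descPochhammer_succ_left ℝ m)
  rw [descPochhammer_succ_eval, eval_mul, eval_X, eval_comp, eval_sub, eval_X, eval_one] at h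
  simp only [genBinom_eq_descPochhammer_eval]
  linear_combination -h / (m.factorial : ℝ)

noncomputable def jacobiMonomial (k m : ℕ) (x : ℝ) : ℝ :=
  ((x - 1) / 2) ^ k * ((x + 1) / 2) ^ m

theorem jacobiP_eq_sum_antidiagonal (n : ℕ) (α β x : ℝ) :
    jacobiP n α β x = ∑ p ∈ antidiagonal n,
      genBinom (n + α) p.1 * genBinom (n + β) p.2 * jacobiMonomial p.2 p.1 x := by
  rw [jacobiP, Nat.sum_antidiagonal_eq_sum_range_succ
    (fun i j => genBinom (n + α) i * genBinom (n + β) j * jacobiMonomial j i x)]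
  simp only [jacobiMonomial, mul_assoc]

theorem hasDerivAt_jacobiMonomial (k m : ℕ) (x : ℝ) :
    HasDerivAt (jacobiMonomial k m)
      (k * ((x - 1) / 2) ^ (k - 1) / 2 * ((x + 1) / 2) ^ m
        + ((x - 1) / 2) ^ k * (m * ((x + 1) / 2) ^ (m - 1) / 2)) x := by
  have hu : HasDerivAt (fun t : ℝ => (t - 1) / 2) (1 / 2) x :=
    ((hasDerivAt_id x).sub_const 1).div_const 2
  have hv : HasDerivAt (fun t : ℝ => (t + 1) / 2) (1 / 2) x :=
    ((hasDerivAt_id x).add_const 1).div_const 2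
  exact ((hu.fun_pow k).fun_mul (hv.fun_pow m)).congr_deriv (by ring)

theorem one_sub_sq_mul_deriv_jacobiMonomial (k m : ℕ) (x : ℝ) :
    (1 - x ^ 2) * deriv (jacobiMonomial k m) x
      = -2 * (k * ((x + 1) / 2) + m * ((x - 1) / 2)) * jacobiMonomial k m x := by
  rw [(hasDerivAt_jacobiMonomial k m x).deriv]
  unfold jacobiMonomial
  have mul_pow_pred (a : ℝ) (j : ℕ) : a * (j * a ^ (j - 1)) = j * a ^ j := by
    rcases j with _ | j
    · simp
    · rw [Nat.add_sub_cancel, pow_succ]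
      ring
  linear_combination (-(x + 1) * ((x + 1) / 2) ^ m) * mul_pow_pred ((x - 1) / 2) k
    + (-(x - 1) * ((x - 1) / 2) ^ k) * mul_pow_pred ((x + 1) / 2) m

theorem stmt9 (n : ℕ) (α β : ℝ) (x : ℝ) :
    (1 - x ^ 2) * deriv (fun t => jacobiP n α β t) x
      = ((n : ℝ) * (1 - x) + 2 * α) * jacobiP n α β x
        - 2 * (α + n) * jacobiP n (α - 1) β x := by
  have hdiff (k m : ℕ) : DifferentiableAt ℝ (jacobiMonomial k m) x :=
    (hasDerivAt_jacobiMonomial k m x).differentiableAt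
  simp_rw [jacobiP_eq_sum_antidiagonal]
  rw [deriv_fun_sum fun p _ => (hdiff p.2 p.1).const_mul _]
  simp only [deriv_const_mul _ (hdiff _ _), mul_sum]
  rw [← sum_sub_distrib]
  refine sum_congr rfl fun ⟨m, k⟩ hmk => ?_
  obtain rfl : m + k = n := HasAntidiagonal.mem_antidiagonal.mp hmk
  have hbinom := mul_genBinom_sub_one (↑(m + k) + α) m
  rw [← add_sub_assoc]
  push_cast at hbinom ⊢
  linear_combination genBinom (m + k + α) m * genBinom (m + k + β) k *
      one_sub_sq_mul_deriv_jacobiMonomial k m x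
    + 2 * genBinom (m + k + β) k * jacobiMonomial k m x * hbinom
end
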